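/- Let f ∈ E₀^lip be ergodic and conservative with respect to Lebesgue measure, and let I be a Markov interval. Then there exist countably many pairwise disjoint subintervals I_j ⊆ I such that the first return map f_I restricted to each I_j is a homeomorphism onto I, and the I_j cover I up to Lebesgue measure zero. -/

import Mathlib

open MeasureTheory Set

/-- Markov interval of order `n` expressed through a lift `F` of a circle map fixing `0`. -/
def MarkovInterval (F : ℝ → ℝ) (n : ℕ) (a b : ℝ) : Prop :=
  a < b ∧ (∀ x ∈ Set.Ioo a b, F^[n] x ∉ Set.range (Int.cast : ℤ → ℝ)) ∧
    F^[n] a ∈ Set.range (Int.cast : ℤ → ℝ) ∧ F^[n] b ∈ Set.range (Int.cast : ℤ → ℝ)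

/-- `F` is a lift of the circle map `f` of degree `d`, with `F 0 = 0`. -/
def IsLiftOf (f : UnitAddCircle → UnitAddCircle) (F : ℝ → ℝ) (d : ℤ) : Prop :=
  (∀ x : ℝ, f (x : UnitAddCircle) = ((F x : ℝ) : UnitAddCircle)) ∧
    (∀ x : ℝ, F (x + 1) = F x + d) ∧ F 0 = 0

/-- `f ∈ E₀^lip`, via its lift: Lipschitz local homeomorphism of the circle fixing `0`
with `λ_f = essinf |f'| > 1`. -/
def MemELip (F : ℝ → ℝ) (lam : ℝ) : Prop :=
  (∃ K : NNReal, LipschitzWith K F) ∧ (StrictMono F ∨ StrictAnti F) ∧ 1 < lam ∧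
    ∀ᵐ x ∂(volume : Measure ℝ), lam ≤ |deriv F x|

/-! Work on the lift. The endpoints of the Markov intervals of order `m` form the closed
countable set `(F^m)⁻¹ ℤ`, and `F^k` maps each Markov interval of order `n + k` onto a Markov
interval of order `n`. So for `j ≤ k`, `F^j` maps a Markov interval of order `n + k` into a
single Markov interval of order `n`: all its points visit the translates of `I` at the same
times up to `k`. A point of `I` off `⋃ₘ (F^m)⁻¹ ℤ` whose first return happens at time `k`
therefore lies in a Markov interval of order `n + k` with constant first return time `k`,
which `f^k` maps bijectively onto `I`. Such branches are countable, pairwise disjoint, and miss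
only the countable set above and the points that never return, a null set by conservativity. -/

open Function

/-- The lift of `f⁻ᵐ(0)`: the endpoints of the Markov intervals of order `m`. -/
def markovEndpoints (F : ℝ → ℝ) (m : ℕ) : Set ℝ :=
  F^[m] ⁻¹' range (Int.cast : ℤ → ℝ)

section Lift

variable {F : ℝ → ℝ} {d : ℤ} {m m' : ℕ} {a b c e x y : ℝ}

theorem add_intCast_of_add_one (hF : ∀ x, F (x + 1) = F x + d) (t : ℤ) (x : ℝ) :
    F (x + t) = F x + t * d := by
  have hper : Periodic (fun x => F x - d * x) 1 := fun x => by simp only [hF]; ring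
  have := hper.int_mul t x
  simp only [mul_one] at this
  linarith

theorem iterate_add_intCast (hF : ∀ x, F (x + 1) = F x + d) (m : ℕ) (t : ℤ) (x : ℝ) :
    F^[m] (x + t) = F^[m] x + ((t * d ^ m : ℤ) : ℝ) := by
  induction m with
  | zero => simp
  | succ m ih =>
    rw [iterate_succ_apply', iterate_succ_apply', ih, add_intCast_of_add_one hF]
    push_cast
    ring

theorem add_intCast_mem_markovEndpoints_iff (hF : ∀ x, F (x + 1) = F x + d) (t : ℤ) :
    x + t ∈ markovEndpoints F m ↔ x ∈ markovEndpoints F m := by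
  simp only [markovEndpoints, mem_preimage, mem_range, iterate_add_intCast hF]
  constructor
  · rintro ⟨s, hs⟩
    exact ⟨s - t * d ^ m, by push_cast at hs ⊢; linarith⟩
  · rintro ⟨s, hs⟩
    exact ⟨s + t * d ^ m, by push_cast at hs ⊢; linarith⟩

theorem intCast_mem_markovEndpoints (hF : ∀ x, F (x + 1) = F x + d) (h0 : F 0 = 0) (t : ℤ) :
    (t : ℝ) ∈ markovEndpoints F m := by
  rw [← zero_add (t : ℝ), add_intCast_mem_markovEndpoints_iff hF]
  exact ⟨0, by simp [iterate_fixed h0]⟩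

theorem markovEndpoints_mono (hF : ∀ x, F (x + 1) = F x + d) (h0 : F 0 = 0) (h : m ≤ m') :
    markovEndpoints F m ⊆ markovEndpoints F m' := by
  rintro x ⟨t, ht⟩
  have : F^[m'] x = F^[m' - m] t := by rw [ht, ← iterate_add_apply, Nat.sub_add_cancel h]
  rw [markovEndpoints, mem_preimage, this]
  exact intCast_mem_markovEndpoints hF h0 t

theorem isClosed_markovEndpoints (hc : Continuous F) (m : ℕ) :
    IsClosed (markovEndpoints F m) :=
  Int.isClosedEmbedding_coe_real.isClosed_range.preimage (hc.iterate m)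

theorem countable_markovEndpoints (hinj : Injective F) (m : ℕ) :
    (markovEndpoints F m).Countable := by
  rw [markovEndpoints, ← iUnion_singleton_eq_range, preimage_iUnion]
  exact countable_iUnion fun t =>
    Subsingleton.countable fun x hx y hy => hinj.iterate m (hx.trans hy.symm)

theorem Ioo_subset_Ioo_of_forall_notMem {Z : Set ℝ} (ha : a ∈ Z) (hb : b ∈ Z)
    (hZ : ∀ z ∈ Ioo c e, z ∉ Z) (hyc : y ∈ Ioo c e) (hya : y ∈ Ioo a b) :
    Ioo c e ⊆ Ioo a b := by
  refine Ioo_subset_Ioo (not_lt.1 fun hca => hZ a ⟨hca, hya.1.trans hyc.2⟩ ha)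
    (not_lt.1 fun hbe => hZ b ⟨hyc.1.trans hya.2, hbe⟩ hb)

theorem exists_Ioo_mem_forall_notMem {Z : Set ℝ} (hZ : IsClosed Z) {u v : ℝ} (hu : u ∈ Z)
    (hv : v ∈ Z) (hux : u ≤ x) (hxv : x ≤ v) (hx : x ∉ Z) :
    ∃ a b, a ∈ Z ∧ b ∈ Z ∧ x ∈ Ioo a b ∧ ∀ z ∈ Ioo a b, z ∉ Z := by
  set A := Z ∩ Icc u x
  set B := Z ∩ Icc x v
  have hA : IsCompact A := isCompact_Icc.inter_left hZ
  have hB : IsCompact B := isCompact_Icc.inter_left hZ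
  have huA : u ∈ A := ⟨hu, le_rfl, hux⟩
  have hvB : v ∈ B := ⟨hv, hxv, le_rfl⟩
  obtain ⟨haZ, -, hax⟩ := hA.sSup_mem ⟨u, huA⟩
  obtain ⟨hbZ, hxb, -⟩ := hB.sInf_mem ⟨v, hvB⟩
  refine ⟨_, _, haZ, hbZ, ⟨hax.lt_of_ne (ne_of_mem_of_not_mem haZ hx),
    hxb.lt_of_ne' (ne_of_mem_of_not_mem hbZ hx)⟩, fun z hz hzZ => ?_⟩
  rcases le_total z x with hzx | hxz
  · have huz : u ≤ z := (le_csSup hA.bddAbove huA).trans hz.1.le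
    exact hz.1.not_ge (le_csSup hA.bddAbove ⟨hzZ, huz, hzx⟩)
  · have hzv : z ≤ v := hz.2.le.trans (csInf_le hB.bddBelow hvB)
    exact hz.2.not_ge (csInf_le hB.bddBelow ⟨hzZ, hxz, hzv⟩)

end Lift

section Markov

variable {F : ℝ → ℝ} {d : ℤ} {m n k j : ℕ} {a b c e x y y' : ℝ}

theorem image_Ioo_eq_uIoo {g : ℝ → ℝ} (hc : Continuous g) (hinj : Injective g) (hab : a ≤ b) :
    g '' Ioo a b = uIoo (g a) (g b) := by
  rcases hc.strictMono_of_inj hinj with h | h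
  · rw [uIoo, min_eq_left (h.monotone hab), max_eq_right (h.monotone hab)]
    refine Subset.antisymm ?_ (intermediate_value_Ioo hab hc.continuousOn)
    rintro _ ⟨x, hx, rfl⟩
    exact ⟨h hx.1, h hx.2⟩
  · rw [uIoo, min_eq_right (h.antitone hab), max_eq_left (h.antitone hab)]
    refine Subset.antisymm ?_ (intermediate_value_Ioo' hab hc.continuousOn)
    rintro _ ⟨x, hx, rfl⟩
    exact ⟨h hx.2, h hx.1⟩

namespace MarkovInterval

theorem left_mem (hM : MarkovInterval F n a b) : a ∈ markovEndpoints F n := hM.2.2.1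

theorem right_mem (hM : MarkovInterval F n a b) : b ∈ markovEndpoints F n := hM.2.2.2

theorem notMem (hM : MarkovInterval F n a b) : ∀ z ∈ Ioo a b, z ∉ markovEndpoints F n := hM.2.1

theorem add_intCast (hF : ∀ x, F (x + 1) = F x + d) (hM : MarkovInterval F n a b) (s : ℤ) :
    MarkovInterval F n (a + s) (b + s) := by
  refine ⟨by linarith [hM.1], fun z hz hzZ => hM.notMem (z + (-s : ℤ)) ?_ ?_,
    (add_intCast_mem_markovEndpoints_iff hF s).2 hM.left_mem,
    (add_intCast_mem_markovEndpoints_iff hF s).2 hM.right_mem⟩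
  · push_cast
    exact ⟨by linarith [hz.1], by linarith [hz.2]⟩
  · exact (add_intCast_mem_markovEndpoints_iff hF _).2 hzZ

theorem le_add_one (hF : ∀ x, F (x + 1) = F x + d) (hM : MarkovInterval F n a b) :
    b ≤ a + 1 := by
  have ha1 : a + (1 : ℤ) ∈ markovEndpoints F n :=
    (add_intCast_mem_markovEndpoints_iff hF 1).2 hM.left_mem
  push_cast at ha1
  exact not_lt.1 fun h => hM.notMem (a + 1) ⟨by linarith, h⟩ ha1

theorem Ioo_subset (hF : ∀ x, F (x + 1) = F x + d) (h0 : F 0 = 0)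
    (hM' : MarkovInterval F m c e) (hM : MarkovInterval F n a b) (hnm : n ≤ m)
    (hyc : y ∈ Ioo c e) (hya : y ∈ Ioo a b) : Ioo c e ⊆ Ioo a b :=
  Ioo_subset_Ioo_of_forall_notMem (markovEndpoints_mono hF h0 hnm hM.left_mem)
    (markovEndpoints_mono hF h0 hnm hM.right_mem) hM'.notMem hyc hya

theorem Ioo_eq (hM : MarkovInterval F n a b) (hM' : MarkovInterval F n c e)
    (hya : y ∈ Ioo a b) (hyc : y ∈ Ioo c e) : Ioo a b = Ioo c e :=
  (Ioo_subset_Ioo_of_forall_notMem hM'.left_mem hM'.right_mem hM.notMem hya hyc).antisymm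
    (Ioo_subset_Ioo_of_forall_notMem hM.left_mem hM.right_mem hM'.notMem hyc hya)

theorem image_iterate (hc : Continuous F) (hinj : Injective F)
    (hM : MarkovInterval F (n + k) a b) :
    ∃ c e, MarkovInterval F n c e ∧ F^[k] '' Ioo a b = Ioo c e := by
  have himg := image_Ioo_eq_uIoo (hc.iterate k) (hinj.iterate k) hM.1.le
  have hend : ∀ w, w ∈ markovEndpoints F (n + k) → F^[k] w ∈ markovEndpoints F n := by
    intro w hw
    simpa only [markovEndpoints, mem_preimage, iterate_add_apply] using hw
  refine ⟨_, _, ⟨min_lt_max.2 ((hinj.iterate k).ne hM.1.ne), fun z hz hzZ => ?_, ?_, ?_⟩, himg⟩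
  · rw [← uIoo, ← himg] at hz
    obtain ⟨w, hw, rfl⟩ := hz
    exact hM.notMem w hw (by simpa only [markovEndpoints, mem_preimage, iterate_add_apply])
  · rcases min_choice (F^[k] a) (F^[k] b) with h | h <;> rw [h]
    exacts [hend a hM.left_mem, hend b hM.right_mem]
  · rcases max_choice (F^[k] a) (F^[k] b) with h | h <;> rw [h]
    exacts [hend a hM.left_mem, hend b hM.right_mem]

/-- `F^j` maps `(a', b')` onto a Markov interval of order `n + (k - j)`, which cannot straddle
an endpoint of order `n`. -/
theorem iterate_mem_of_mem (hF : ∀ x, F (x + 1) = F x + d) (h0 : F 0 = 0) (hc : Continuous F)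
    (hinj : Injective F) {a' b' : ℝ} (hM : MarkovInterval F n a b)
    (hM' : MarkovInterval F (n + k) a' b') (hj : j ≤ k) (hy : y ∈ Ioo a' b')
    (hy' : y' ∈ Ioo a' b') (hjy : F^[j] y ∈ Ioo a b) : F^[j] y' ∈ Ioo a b := by
  rw [show n + k = n + (k - j) + j by omega] at hM'
  obtain ⟨c, e, hce, himg⟩ := hM'.image_iterate hc hinj
  have hsub := hce.Ioo_subset hF h0 hM (Nat.le_add_right n _)
    (himg ▸ mem_image_of_mem _ hy) hjy
  exact hsub (himg ▸ mem_image_of_mem _ hy')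

end MarkovInterval

theorem exists_markovInterval_mem (hF : ∀ x, F (x + 1) = F x + d) (h0 : F 0 = 0)
    (hc : Continuous F) (hx : x ∉ markovEndpoints F m) :
    ∃ a b, MarkovInterval F m a b ∧ x ∈ Ioo a b := by
  obtain ⟨a, b, ha, hb, hxab, hZ⟩ := exists_Ioo_mem_forall_notMem (isClosed_markovEndpoints hc m)
    (intCast_mem_markovEndpoints hF h0 ⌊x⌋) (intCast_mem_markovEndpoints hF h0 (⌊x⌋ + 1))
    (Int.floor_le x) (by push_cast; exact (Int.lt_floor_add_one x).le) hx
  exact ⟨a, b, ⟨hxab.1.trans hxab.2, hZ, ha, hb⟩, hxab⟩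

end Markov

section Circle

theorem coe_eq_coe_iff_exists_intCast {x y : ℝ} :
    (x : UnitAddCircle) = y ↔ ∃ s : ℤ, y = x + s := by
  rw [eq_comm, ← sub_eq_zero, ← AddCircle.coe_sub, AddCircle.coe_eq_zero_iff]
  simp only [zsmul_eq_mul, mul_one]
  exact ⟨fun ⟨s, hs⟩ => ⟨s, by linarith⟩, fun ⟨s, hs⟩ => ⟨s, by linarith⟩⟩

theorem coe_mem_image_Ioo_iff {a b x : ℝ} :
    (x : UnitAddCircle) ∈ ((↑) : ℝ → UnitAddCircle) '' Ioo a b ↔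
      ∃ s : ℤ, x ∈ Ioo (a + s) (b + s) := by
  constructor
  · rintro ⟨w, hw, hwx⟩
    obtain ⟨s, rfl⟩ := coe_eq_coe_iff_exists_intCast.1 hwx
    exact ⟨s, by linarith [hw.1], by linarith [hw.2]⟩
  · rintro ⟨s, hs⟩
    refine ⟨x - s, ⟨by linarith [hs.1], by linarith [hs.2]⟩, ?_⟩
    exact coe_eq_coe_iff_exists_intCast.2 ⟨s, by ring⟩

theorem injOn_coe_Ioo {a b : ℝ} (h : b ≤ a + 1) :
    InjOn ((↑) : ℝ → UnitAddCircle) (Ioo a b) := fun _ hx _ hy hxy =>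
  (AddCircle.coe_eq_coe_iff_of_mem_Ico (a := a) ⟨hx.1.le, hx.2.trans_le h⟩
    ⟨hy.1.le, hy.2.trans_le h⟩).1 hxy

instance : NullSingletonClass (volume : Measure UnitAddCircle) where
  measure_singleton x := by
    simpa using AddCircle.volume_closedBall 1 (x := x) 0

end Circle

section FirstReturn

variable {α : Type*} {f : α → α} {I : Set α} {k k' : ℕ} {x y : α}

/-- `x` itself need not lie in `I`. -/
def IsFirstReturnTime (f : α → α) (I : Set α) (k : ℕ) (x : α) : Prop :=
  1 ≤ k ∧ f^[k] x ∈ I ∧ ∀ j, 1 ≤ j → j < k → f^[j] x ∉ I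

theorem IsFirstReturnTime.unique (h : IsFirstReturnTime f I k x)
    (h' : IsFirstReturnTime f I k' x) : k = k' := by
  by_contra hne
  rcases Nat.lt_or_gt_of_ne hne with hlt | hlt
  · exact h'.2.2 k h.1 hlt h.2.1
  · exact h.2.2 k' h'.1 hlt h'.2.1

theorem exists_isFirstReturnTime (h : ∃ k, 1 ≤ k ∧ f^[k] x ∈ I) :
    ∃ k, IsFirstReturnTime f I k x := by
  classical
  exact ⟨Nat.find h, (Nat.find_spec h).1, (Nat.find_spec h).2,
    fun j hj hlt hjI => Nat.find_min h hlt ⟨hj, hjI⟩⟩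

theorem IsFirstReturnTime.of_iterate_mem_iff (h : IsFirstReturnTime f I k x)
    (hxy : ∀ j ≤ k, f^[j] x ∈ I ↔ f^[j] y ∈ I) : IsFirstReturnTime f I k y :=
  ⟨h.1, (hxy k le_rfl).1 h.2.1, fun j hj hlt hjI => h.2.2 j hj hlt ((hxy j hlt.le).2 hjI)⟩

theorem measure_nonReturning_eq_zero [MeasurableSpace α] {μ : Measure α} (hf : Measurable f)
    (hcons : ∀ X : Set α, MeasurableSet X →
      X ∩ (⋃ k : ℕ, ⋃ _ : 1 ≤ k, f^[k] ⁻¹' X) = ∅ → μ X = 0)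
    (hI : MeasurableSet I) : μ (I ∩ ⋂ k : ℕ, ⋂ _ : 1 ≤ k, (f^[k] ⁻¹' I)ᶜ) = 0 := by
  refine hcons _ (hI.inter (.iInter fun k => .iInter fun _ => (hf.iterate k hI).compl)) ?_
  refine eq_empty_of_forall_notMem ?_
  rintro x ⟨⟨-, hx⟩, hret⟩
  simp only [mem_iUnion, mem_iInter, mem_preimage, mem_compl_iff] at hx hret
  obtain ⟨k, hk, hkI, -⟩ := hret
  exact hx k hk hkI

end FirstReturn

section ReturnBranch

variable {f : UnitAddCircle → UnitAddCircle} {F : ℝ → ℝ} {d : ℤ} {n k j : ℕ}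
  {a b a' b' y y' : ℝ}

structure IsReturnBranch (f : UnitAddCircle → UnitAddCircle) (F : ℝ → ℝ) (n : ℕ) (a b : ℝ)
    (k : ℕ) (a' b' : ℝ) : Prop where
  markov : MarkovInterval F (n + k) a' b'
  subset : Ioo a' b' ⊆ Ioo a b
  isFirstReturnTime :
    ∀ y ∈ Ioo a' b', IsFirstReturnTime f (((↑) : ℝ → UnitAddCircle) '' Ioo a b) k y

def returnBranches (f : UnitAddCircle → UnitAddCircle) (F : ℝ → ℝ) (n : ℕ) (a b : ℝ) :
    Set (Set UnitAddCircle) :=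
  (fun p : ℕ × ℝ × ℝ => ((↑) : ℝ → UnitAddCircle) '' Ioo p.2.1 p.2.2) ''
    {p | IsReturnBranch f F n a b p.1 p.2.1 p.2.2}

theorem IsReturnBranch.one_le (hB : IsReturnBranch f F n a b k a' b') : 1 ≤ k :=
  let ⟨y, hy⟩ := nonempty_Ioo.2 hB.markov.1
  (hB.isFirstReturnTime y hy).1

theorem iterate_coe_mem_of_mem (hπ : Semiconj ((↑) : ℝ → UnitAddCircle) F f)
    (hF : ∀ x, F (x + 1) = F x + d) (h0 : F 0 = 0) (hc : Continuous F) (hinj : Injective F)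
    (hM : MarkovInterval F n a b) (hM' : MarkovInterval F (n + k) a' b') (hj : j ≤ k)
    (hy : y ∈ Ioo a' b') (hy' : y' ∈ Ioo a' b')
    (h : f^[j] y ∈ ((↑) : ℝ → UnitAddCircle) '' Ioo a b) :
    f^[j] y' ∈ ((↑) : ℝ → UnitAddCircle) '' Ioo a b := by
  rw [← (hπ.iterate_right j).eq, coe_mem_image_Ioo_iff] at h ⊢
  obtain ⟨s, hs⟩ := h
  exact ⟨s, (hM.add_intCast hF s).iterate_mem_of_mem hF h0 hc hinj hM' hj hy hy' hs⟩

theorem exists_isReturnBranch_mem (hπ : Semiconj ((↑) : ℝ → UnitAddCircle) F f)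
    (hF : ∀ x, F (x + 1) = F x + d) (h0 : F 0 = 0) (hc : Continuous F) (hinj : Injective F)
    (hM : MarkovInterval F n a b) (hy : y ∈ Ioo a b) (hyk : y ∉ markovEndpoints F (n + k))
    (hk : IsFirstReturnTime f (((↑) : ℝ → UnitAddCircle) '' Ioo a b) k y) :
    ∃ a' b', IsReturnBranch f F n a b k a' b' ∧ y ∈ Ioo a' b' := by
  obtain ⟨a', b', hM', hya'⟩ := exists_markovInterval_mem hF h0 hc hyk
  refine ⟨a', b', ⟨hM', hM'.Ioo_subset hF h0 hM (Nat.le_add_right _ _) hya' hy,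
    fun y' hy' => hk.of_iterate_mem_iff fun j hj => ⟨?_, ?_⟩⟩, hya'⟩
  · exact iterate_coe_mem_of_mem hπ hF h0 hc hinj hM hM' hj hya' hy'
  · exact iterate_coe_mem_of_mem hπ hF h0 hc hinj hM hM' hj hy' hya'

theorem IsReturnBranch.bijOn (hπ : Semiconj ((↑) : ℝ → UnitAddCircle) F f)
    (hF : ∀ x, F (x + 1) = F x + d) (hc : Continuous F) (hinj : Injective F)
    (hM : MarkovInterval F n a b) (hB : IsReturnBranch f F n a b k a' b') :
    BijOn f^[k] (((↑) : ℝ → UnitAddCircle) '' Ioo a' b') (((↑) : ℝ → UnitAddCircle) '' Ioo a b) := by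
  obtain ⟨c, e, hce, himg⟩ := hB.markov.image_iterate hc hinj
  have hmem : ∀ y ∈ Ioo a' b', F^[k] y ∈ Ioo c e := fun y hy => himg ▸ mem_image_of_mem _ hy
  refine ⟨?_, ?_, ?_⟩
  · rintro _ ⟨y, hy, rfl⟩
    exact (hB.isFirstReturnTime y hy).2.1
  · rintro _ ⟨y₁, hy₁, rfl⟩ _ ⟨y₂, hy₂, rfl⟩ h
    rw [← (hπ.iterate_right k).eq, ← (hπ.iterate_right k).eq] at h
    exact congrArg _ (hinj.iterate k (injOn_coe_Ioo (hce.le_add_one hF) (hmem y₁ hy₁)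
      (hmem y₂ hy₂) h))
  · obtain ⟨y₀, hy₀⟩ := nonempty_Ioo.2 hB.markov.1
    have hret := (hB.isFirstReturnTime y₀ hy₀).2.1
    rw [← (hπ.iterate_right k).eq, coe_mem_image_Ioo_iff] at hret
    obtain ⟨s, hs⟩ := hret
    have hce_eq := (hM.add_intCast hF s).Ioo_eq hce hs (hmem y₀ hy₀)
    rintro _ ⟨w, hw, rfl⟩
    have hws : w + s ∈ F^[k] '' Ioo a' b' := by
      rw [himg, ← hce_eq]
      exact ⟨by linarith [hw.1], by linarith [hw.2]⟩
    obtain ⟨y, hy, hyw⟩ := hws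
    refine ⟨y, ⟨y, hy, rfl⟩, ?_⟩
    rw [← (hπ.iterate_right k).eq, hyw]
    exact (coe_eq_coe_iff_exists_intCast.2 ⟨s, rfl⟩).symm

theorem countable_returnBranches (hinj : Injective F) :
    (returnBranches f F n a b).Countable := by
  refine Countable.image (Countable.mono ?_ (countable_iUnion fun k =>
    (countable_singleton k).prod ((countable_markovEndpoints hinj (n + k)).prod
      (countable_markovEndpoints hinj (n + k))))) _
  rintro ⟨k, a', b'⟩ hB
  exact mem_iUnion.2 ⟨k, rfl, hB.markov.left_mem, hB.markov.right_mem⟩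

theorem pairwise_disjoint_returnBranches (hF : ∀ x, F (x + 1) = F x + d)
    (hM : MarkovInterval F n a b) : (returnBranches f F n a b).Pairwise Disjoint := by
  rintro _ ⟨⟨k₁, a₁, b₁⟩, hB₁, rfl⟩ _ ⟨⟨k₂, a₂, b₂⟩, hB₂, rfl⟩ hne
  by_contra hnd
  obtain ⟨_, ⟨y₁, hy₁, rfl⟩, y₂, hy₂, hy⟩ := not_disjoint_iff.1 hnd
  obtain rfl := injOn_coe_Ioo (hM.le_add_one hF) (hB₂.subset hy₂) (hB₁.subset hy₁) hy
  obtain rfl := (hB₁.isFirstReturnTime y₂ hy₁).unique (hB₂.isFirstReturnTime y₂ hy₂)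
  exact hne (congrArg (((↑) : ℝ → UnitAddCircle) '' ·) (hB₁.markov.Ioo_eq hB₂.markov hy₁ hy₂))

theorem diff_sUnion_returnBranches_subset (hπ : Semiconj ((↑) : ℝ → UnitAddCircle) F f)
    (hF : ∀ x, F (x + 1) = F x + d) (h0 : F 0 = 0) (hc : Continuous F) (hinj : Injective F)
    (hM : MarkovInterval F n a b) :
    ((↑) : ℝ → UnitAddCircle) '' Ioo a b \ ⋃₀ returnBranches f F n a b ⊆
      ((↑) : ℝ → UnitAddCircle) '' (⋃ m, markovEndpoints F m) ∪
        (((↑) : ℝ → UnitAddCircle) '' Ioo a b ∩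
          ⋂ k : ℕ, ⋂ _ : 1 ≤ k, (f^[k] ⁻¹' (((↑) : ℝ → UnitAddCircle) '' Ioo a b))ᶜ) := by
  rintro _ ⟨⟨y, hy, rfl⟩, hnot⟩
  by_cases hend : ∃ m, y ∈ markovEndpoints F m
  · exact Or.inl ⟨y, mem_iUnion.2 hend, rfl⟩
  rw [not_exists] at hend
  refine Or.inr ⟨⟨y, hy, rfl⟩, ?_⟩
  simp only [mem_iInter, mem_compl_iff, mem_preimage]
  intro k hk hkI
  obtain ⟨k, hret⟩ := exists_isFirstReturnTime ⟨k, hk, hkI⟩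
  obtain ⟨a', b', hB, hy'⟩ := exists_isReturnBranch_mem hπ hF h0 hc hinj hM hy (hend _) hret
  exact hnot ⟨_, ⟨(k, a', b'), hB, rfl⟩, y, hy', rfl⟩

end ReturnBranch

theorem return_map_full_branches_general
    (f : UnitAddCircle → UnitAddCircle) (F : ℝ → ℝ) (d : ℤ) (lam : ℝ)
    (hlift : IsLiftOf f F d) (hlip : MemELip F lam) (hmeas : Measurable f)
    (hcons : ∀ X : Set UnitAddCircle, MeasurableSet X →
      X ∩ (⋃ k : ℕ, ⋃ _ : 1 ≤ k, f^[k] ⁻¹' X) = ∅ → volume X = 0)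
    (n : ℕ) (a b : ℝ) (hM : MarkovInterval F n a b)
    (I : Set UnitAddCircle) (hI : I = (fun x : ℝ => (x : UnitAddCircle)) '' Set.Ioo a b) :
    ∃ 𝓙 : Set (Set UnitAddCircle), 𝓙.Countable ∧
      (∀ J ∈ 𝓙, J ⊆ I ∧
        (∃ a' b' : ℝ, a' < b' ∧ J = (fun x : ℝ => (x : UnitAddCircle)) '' Set.Ioo a' b') ∧
        ∃ k : ℕ, 1 ≤ k ∧
          (∀ x ∈ J, f^[k] x ∈ I ∧ ∀ j : ℕ, 1 ≤ j → j < k → f^[j] x ∉ I) ∧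
          Set.BijOn (f^[k]) J I) ∧
      (𝓙.Pairwise Disjoint) ∧
      volume (I \ ⋃₀ 𝓙) = 0 := by
  obtain ⟨hfF, hF, h0⟩ := hlift
  have hπ : Semiconj ((↑) : ℝ → UnitAddCircle) F f := fun x => (hfF x).symm
  obtain ⟨⟨K, hK⟩, hmono, -⟩ := hlip
  have hc : Continuous F := hK.continuous
  have hinj : Injective F := hmono.elim StrictMono.injective StrictAnti.injective
  subst hI
  refine ⟨returnBranches f F n a b, countable_returnBranches hinj, ?_,
    pairwise_disjoint_returnBranches hF hM, ?_⟩
  · rintro _ ⟨⟨k, a', b'⟩, hB, rfl⟩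
    refine ⟨image_mono hB.subset, ⟨a', b', hB.markov.1, rfl⟩, k, hB.one_le, ?_,
      hB.bijOn hπ hF hc hinj hM⟩
    rintro _ ⟨y, hy, rfl⟩
    exact (hB.isFirstReturnTime y hy).2
  · have hI : MeasurableSet (((↑) : ℝ → UnitAddCircle) '' Ioo a b) :=
      (QuotientAddGroup.isOpenMap_coe _ isOpen_Ioo).measurableSet
    refine measure_mono_null (diff_sUnion_returnBranches_subset hπ hF h0 hc hinj hM)
      (measure_union_null ?_ (measure_nonReturning_eq_zero hmeas hcons hI))
    exact ((countable_iUnion (countable_markovEndpoints hinj)).image _).measure_zero _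

/-- **Full branches of the first return map.**
Let `f ∈ E₀^lip` be ergodic and conservative with respect to Lebesgue measure, and let
`I` be a Markov interval.  Then there is a countable family of pairwise disjoint open
subintervals `J ⊆ I` such that on each `J` the first return map `f_I` coincides with an
iterate `f^[k]` (the constant first return time on `J`) mapping `J` bijectively onto
`I`, and these subintervals cover `I` up to Lebesgue measure zero. -/
theorem return_map_full_branches
    (f : UnitAddCircle → UnitAddCircle) (F : ℝ → ℝ) (d : ℤ) (lam : ℝ)
    (hlift : IsLiftOf f F d) (hlip : MemELip F lam) (hmeas : Measurable f)
    (herg : ∀ X : Set UnitAddCircle, MeasurableSet X → f ⁻¹' X = X →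
      volume X = 0 ∨ volume X = 1)
    (hcons : ∀ X : Set UnitAddCircle, MeasurableSet X →
      X ∩ (⋃ k : ℕ, ⋃ _ : 1 ≤ k, f^[k] ⁻¹' X) = ∅ → volume X = 0)
    (n : ℕ) (a b : ℝ) (hM : MarkovInterval F n a b)
    (I : Set UnitAddCircle) (hI : I = (fun x : ℝ => (x : UnitAddCircle)) '' Set.Ioo a b) :
    ∃ 𝓙 : Set (Set UnitAddCircle), 𝓙.Countable ∧
      (∀ J ∈ 𝓙, J ⊆ I ∧
        (∃ a' b' : ℝ, a' < b' ∧ J = (fun x : ℝ => (x : UnitAddCircle)) '' Set.Ioo a' b') ∧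
        ∃ k : ℕ, 1 ≤ k ∧
          (∀ x ∈ J, f^[k] x ∈ I ∧ ∀ j : ℕ, 1 ≤ j → j < k → f^[j] x ∉ I) ∧
          Set.BijOn (f^[k]) J I) ∧
      (𝓙.Pairwise Disjoint) ∧
      volume (I \ ⋃₀ 𝓙) = 0 :=
  return_map_full_branches_general f F d lam hlift hlip hmeas hcons n a b hM I hI
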